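/- Let α ∈ [0,1), Λ > 0, c > 0, and let y_c be a stable-manifold function for the parameter c. Then for every x > 0 the function s ↦ 1/(−y_c(s)) is integrable on (0,x), so the settling time T(x,c) = ∫₀^x ds/(−y_c(s)) is finite; moreover, for all x with 0 < x < x₁(c) = (2Λ/((1+α)c²))^{1/(1−α)} one has the bounds ((2(1+α)Λ)^{1/2}/(1−α))·x^{(1−α)/2} < T(x,c) < ((2(1+α)Λ)^{1/2}/(1−α))·x^{(1−α)/2}·(1 − c·((1+α)/(2Λ))^{1/2}·x^{(1−α)/2})^{−1}. -/

import Mathlib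

open Real Set MeasureTheory Filter

noncomputable section

/-- A stable-manifold function for the parameter `c`: a continuous function on `[0,∞)`
vanishing at `0`, negative for `x > 0`, differentiable on `(0,∞)`, whose graph is a
trajectory of the vector field `x' = y`, `Λ y' = c y + x^α`, i.e.
`Λ y(x) y'(x) = c y(x) + x^α` for all `x > 0`. -/
def IsStableManifold (α Λ c : ℝ) (y : ℝ → ℝ) : Prop :=
  ContinuousOn y (Set.Ici 0) ∧ y 0 = 0 ∧
  (∀ x > 0, y x < 0) ∧ (∀ x > 0, DifferentiableAt ℝ y x) ∧
  (∀ x > 0, Λ * y x * deriv y x = c * y x + x ^ α)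

open Topology

/-!
Write `A = √(2/((1+α)Λ))`. Along the stable manifold `(y²)' = (2/Λ)(c y + x^α) < (2/Λ) x^α`,
so `-y < A x^{(1+α)/2}`. Feeding this back into the equation shows that
`g = A x^{(1+α)/2} - c x / Λ` is a subsolution for `-y` as long as `g > 0`, which holds below
`x₁(c)`, and comparing `g²` with `y²` gives `-y ≥ g`. Integrating `1/(-y)` against the two
resulting multiples of `s^{-(1+α)/2}` gives the bounds on `T(x,c)`; integrability near `0` comes
from the lower bound on `-y`, away from `0` from continuity.
-/

theorem image_le_of_deriv_lt_deriv_boundary_Ioo {f f' B B' : ℝ → ℝ} {a b : ℝ}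
    (hf : ContinuousOn f (Icc a b)) (hf' : ∀ x ∈ Ioo a b, HasDerivAt f (f' x) x)
    (ha : f a ≤ B a) (hB : ContinuousOn B (Icc a b)) (hB' : ∀ x ∈ Ioo a b, HasDerivAt B (B' x) x)
    (bound : ∀ x ∈ Ioo a b, B x ≤ f x → f' x < B' x) :
    ∀ ⦃x⦄, x ∈ Icc a b → f x ≤ B x := by
  intro x hx
  by_contra! hlt
  have hsub : Icc a x ⊆ Icc a b := Icc_subset_Icc le_rfl hx.2
  have hd : ContinuousOn (fun t => f t - B t) (Icc a x) := (hf.sub hB).mono hsub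
  -- `sSup S` is the last point of `[a, x]` where `f ≤ B`; after it `f - B > 0`, hence decreasing
  set S := Icc a x ∩ (fun t => f t - B t) ⁻¹' Iic 0
  have hSa : a ∈ S := ⟨left_mem_Icc.2 hx.1, sub_nonpos.2 ha⟩
  have hSbdd : BddAbove S := ⟨x, fun t ht => ht.1.2⟩
  have hs : sSup S ∈ S :=
    (hd.preimage_isClosed_of_isClosed isClosed_Icc isClosed_Iic).csSup_mem ⟨a, hSa⟩ hSbdd
  have has : a ≤ sSup S := hs.1.1
  have hsS : f (sSup S) - B (sSup S) ≤ 0 := hs.2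
  have hsx : sSup S < x := hs.1.2.lt_of_ne fun h => by
    rw [h] at hsS
    linarith
  have hpos : ∀ t ∈ Ioo (sSup S) x, B t < f t := fun t ht => by
    by_contra! hle
    exact absurd (le_csSup hSbdd ⟨⟨has.trans ht.1.le, ht.2.le⟩, sub_nonpos.2 hle⟩) (not_le.2 ht.1)
  have hanti : StrictAntiOn (fun t => f t - B t) (Icc (sSup S) x) := by
    refine strictAntiOn_of_deriv_neg (convex_Icc _ _) (hd.mono (Icc_subset_Icc has le_rfl))
      fun t ht => ?_
    rw [interior_Icc] at ht
    have htab : t ∈ Ioo a b := ⟨has.trans_lt ht.1, ht.2.trans_le hx.2⟩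
    have hd' : HasDerivAt (fun t => f t - B t) (f' t - B' t) t := (hf' t htab).sub (hB' t htab)
    rw [hd'.deriv, sub_neg]
    exact bound t htab (hpos t ht).le
  have := hanti (left_mem_Icc.2 hsx.le) (right_mem_Icc.2 hsx.le) hsx
  simp only at this
  linarith

theorem intervalIntegral.integral_lt_integral_of_forall_mem_Ioo_lt {f g : ℝ → ℝ} {a b : ℝ}
    (hab : a < b) (hf : IntervalIntegrable f volume a b) (hg : IntervalIntegrable g volume a b)
    (hlt : ∀ x ∈ Ioo a b, f x < g x) : ∫ x in a..b, f x < ∫ x in a..b, g x := by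
  refine integral_lt_integral_of_ae_le_of_measure_setOfPred_lt_ne_zero hab.le hf hg ?_ ?_ <;>
    rw [← Measure.restrict_congr_set Ioo_ae_eq_Ioc]
  · exact (ae_restrict_iff' measurableSet_Ioo).2 (ae_of_all _ fun x hx => (hlt x hx).le)
  · rw [Measure.restrict_apply' measurableSet_Ioo,
      inter_eq_right.2 fun x hx => show x ∈ {x | f x < g x} from hlt x hx, Real.volume_Ioo]
    simpa using hab

theorem integral_rpow_neg_of_lt_one {p : ℝ} (hp : p < 1) (x : ℝ) :
    ∫ s in (0:ℝ)..x, s ^ (-p) = x ^ (1 - p) / (1 - p) := by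
  rw [integral_rpow (Or.inl (by linarith)), neg_add_eq_sub, zero_rpow (by linarith), sub_zero]

theorem rpow_div_two_sq {x : ℝ} (hx : 0 ≤ x) (r : ℝ) : (x ^ (r / 2)) ^ 2 = x ^ r := by
  rw [← rpow_mul_natCast hx]
  norm_num

theorem rpow_mul_rpow_of_add_eq_one {x a b : ℝ} (hx : 0 < x) (hab : a + b = 1) :
    x ^ a * x ^ b = x := by
  rw [← rpow_add hx, hab, rpow_one]

/-- The coefficient `A` of the leading behaviour `y_c(x) ≈ -A x^{(1+α)/2}` near `0`. -/
def stableCoeff (α Λ : ℝ) : ℝ := √(2 / ((1 + α) * Λ))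

section StableCoeff

variable {α Λ : ℝ}

theorem stableCoeff_pos (hα : -1 < α) (hΛ : 0 < Λ) : 0 < stableCoeff α Λ :=
  sqrt_pos.2 (div_pos two_pos (mul_pos (by linarith) hΛ))

theorem one_add_mul_mul_stableCoeff_sq (hα : -1 < α) (hΛ : 0 < Λ) :
    (1 + α) * Λ * stableCoeff α Λ ^ 2 = 2 := by
  have h : 0 < 1 + α := by linarith
  rw [stableCoeff, sq_sqrt (by positivity)]
  field_simp

theorem sqrt_mul_stableCoeff (hα : -1 < α) (hΛ : 0 < Λ) :
    √(2 * (1 + α) * Λ) * stableCoeff α Λ = 2 := by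
  have h : 0 < 1 + α := by linarith
  rw [stableCoeff, ← sqrt_mul (by positivity),
    show 2 * (1 + α) * Λ * (2 / ((1 + α) * Λ)) = 2 ^ 2 by field_simp, sqrt_sq two_pos.le]

theorem sqrt_mul_stableCoeff_mul (hα : -1 < α) (hΛ : 0 < Λ) :
    √((1 + α) / (2 * Λ)) * stableCoeff α Λ * Λ = 1 := by
  have h : 0 < 1 + α := by linarith
  rw [stableCoeff, ← sqrt_mul (by positivity),
    show (1 + α) / (2 * Λ) * (2 / ((1 + α) * Λ)) = Λ⁻¹ ^ 2 by field_simp,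
    sqrt_sq (inv_pos.2 hΛ).le, inv_mul_cancel₀ hΛ.ne']

end StableCoeff

theorem mul_sqrt_mul_rpow_lt_one {α Λ c x : ℝ} (hα : -1 < α) (hα1 : α < 1) (hΛ : 0 < Λ)
    (hc : 0 < c) (hx0 : 0 ≤ x) (hx : x < (2 * Λ / ((1 + α) * c ^ 2)) ^ ((1:ℝ) / (1 - α))) :
    c * √((1 + α) / (2 * Λ)) * x ^ ((1 - α) / 2) < 1 := by
  have h1 : 0 < 1 + α := by linarith
  have hxα : x ^ (1 - α) < 2 * Λ / ((1 + α) * c ^ 2) := by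
    rw [one_div] at hx
    exact (lt_rpow_inv_iff_of_pos hx0 (by positivity) (by linarith)).1 hx
  refine (pow_lt_one_iff_of_nonneg (by positivity) two_ne_zero).1 ?_
  calc (c * √((1 + α) / (2 * Λ)) * x ^ ((1 - α) / 2)) ^ 2
      = c ^ 2 * ((1 + α) / (2 * Λ)) * x ^ (1 - α) := by
        rw [mul_pow, mul_pow, sq_sqrt (by positivity), rpow_div_two_sq hx0]
    _ < c ^ 2 * ((1 + α) / (2 * Λ)) * (2 * Λ / ((1 + α) * c ^ 2)) := by gcongr
    _ = 1 := by field_simp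

namespace IsStableManifold

variable {α Λ c : ℝ} {y : ℝ → ℝ}

theorem lt_zero (hy : IsStableManifold α Λ c y) {x : ℝ} (hx : 0 < x) : y x < 0 :=
  hy.2.2.1 x hx

theorem continuousOn_one_div_neg (hy : IsStableManifold α Λ c y) :
    ContinuousOn (fun s => 1 / -y s) (Ioi 0) :=
  continuousOn_const.div (hy.1.mono Ioi_subset_Ici_self).neg
    fun _ hs => (neg_pos.2 (hy.lt_zero hs)).ne'

theorem hasDerivAt_sq (hy : IsStableManifold α Λ c y) (hΛ : Λ ≠ 0) {x : ℝ} (hx : 0 < x) :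
    HasDerivAt (fun t => y t ^ 2) (2 / Λ * (c * y x + x ^ α)) x := by
  refine ((hy.2.2.2.1 x hx).hasDerivAt.fun_pow 2).congr_deriv ?_
  rw [← hy.2.2.2.2 x hx]
  field_simp
  ring

theorem sq_lt (hy : IsStableManifold α Λ c y) (hα : -1 < α) (hΛ : 0 < Λ) (hc : 0 < c)
    {x : ℝ} (hx : 0 < x) : y x ^ 2 < stableCoeff α Λ ^ 2 * x ^ (1 + α) := by
  set A := stableCoeff α Λ
  have hmono : StrictMonoOn (fun t => A ^ 2 * t ^ (1 + α) - y t ^ 2) (Ici 0) := by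
    refine strictMonoOn_of_deriv_pos (convex_Ici 0)
      ((continuousOn_const.mul (continuousOn_id.rpow_const fun _ _ => Or.inr (by linarith))).sub
        (hy.1.pow 2)) fun t ht => ?_
    rw [interior_Ici] at ht
    have hd := ((hasDerivAt_rpow_const (p := 1 + α) (Or.inl (ne_of_gt ht))).const_mul
      (A ^ 2)).fun_sub (hy.hasDerivAt_sq hΛ.ne' ht)
    rw [hd.deriv, add_sub_cancel_left]
    have hA := one_add_mul_mul_stableCoeff_sq hα hΛ
    have hcy : c * y t < 0 := mul_neg_of_pos_of_neg hc (hy.lt_zero ht)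
    have key : A ^ 2 * ((1 + α) * t ^ α) - 2 / Λ * (c * y t + t ^ α) = -(2 / Λ) * (c * y t) := by
      field_simp
      linear_combination t ^ α * hA
    rw [key]
    exact mul_pos_of_neg_of_neg (neg_neg_of_pos (by positivity)) hcy
  have := hmono self_mem_Ici hx.le hx
  simp only [hy.2.1, zero_rpow (by linarith : (1:ℝ) + α ≠ 0)] at this
  linarith

theorem neg_lt (hy : IsStableManifold α Λ c y) (hα : -1 < α) (hΛ : 0 < Λ) (hc : 0 < c)
    {x : ℝ} (hx : 0 < x) : -y x < stableCoeff α Λ * x ^ ((1 + α) / 2) := by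
  have hA := stableCoeff_pos hα hΛ
  rw [← sq_lt_sq₀ (neg_pos.2 (hy.lt_zero hx)).le (by positivity), neg_sq, mul_pow,
    rpow_div_two_sq hx.le]
  exact hy.sq_lt hα hΛ hc hx

theorem sub_le_neg (hy : IsStableManifold α Λ c y) (hα : -1 < α) (hΛ : 0 < Λ) (hc : 0 < c)
    {b : ℝ} (hb : ∀ t ∈ Ioo 0 b, c / Λ * t < stableCoeff α Λ * t ^ ((1 + α) / 2))
    {x : ℝ} (hx : x ∈ Ioo 0 b) :
    stableCoeff α Λ * x ^ ((1 + α) / 2) - c / Λ * x ≤ -y x := by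
  have h1α : 0 < 1 + α := by linarith
  have hA := one_add_mul_mul_stableCoeff_sq hα hΛ
  have hA0 := stableCoeff_pos hα hΛ
  set A := stableCoeff α Λ
  set p := (1 + α) / 2
  set g := fun t => A * t ^ p - c / Λ * t
  have hp : 0 < p := by positivity
  have hg' : ∀ t > 0, HasDerivAt g (A * (p * t ^ (p - 1)) - c / Λ) t := fun t ht => by
    simpa using ((hasDerivAt_rpow_const (Or.inl (ne_of_gt ht))).const_mul A).fun_sub
      ((hasDerivAt_id t).const_mul (c / Λ))
  have hg2' : ∀ t > 0,
      HasDerivAt (fun t => g t ^ 2) (2 * g t * (A * (p * t ^ (p - 1)) - c / Λ)) t :=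
    fun t ht => ((hg' t ht).fun_pow 2).congr_deriv (by ring)
  -- `g` is a subsolution: where `y² ≤ g²`, the square `g²` grows strictly slower than `y²`
  have hsq : ∀ t ∈ Icc 0 b, g t ^ 2 ≤ y t ^ 2 := by
    refine image_le_of_deriv_lt_deriv_boundary_Ioo
      (((continuousOn_const.mul (continuousOn_id.rpow_const fun _ _ => Or.inr hp.le)).sub
        (continuousOn_const.mul continuousOn_id)).pow 2) (fun t ht => hg2' t ht.1)
      (by simp [g, hy.2.1, zero_rpow hp.ne']) ((hy.1.mono Icc_subset_Ici_self).pow 2)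
      (fun t ht => hy.hasDerivAt_sq hΛ.ne' ht.1) fun t ht hle => ?_
    have hgt : 0 < g t := sub_pos.2 (hb t ht)
    have hvg : -y t ≤ g t :=
      (sq_le_sq₀ (neg_pos.2 (hy.lt_zero ht.1)).le hgt.le).1 (by rwa [neg_sq])
    have hpr : t ^ p * t ^ (p - 1) = t ^ α := by
      rw [← rpow_add ht.1]; congr 1; ring
    have hxr : t * t ^ (p - 1) = t ^ p := by
      rw [mul_comm, ← rpow_add_one (ne_of_gt ht.1)]; congr 1; ring
    have hid : 2 * g t * (A * (p * t ^ (p - 1)) - c / Λ)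
        = 2 / Λ * (t ^ α - c * g t) - c * (1 + α) * A / Λ * t ^ p := by
      linear_combination A ^ 2 * (1 + α) * hpr - c / Λ * (1 + α) * A * hxr + t ^ α / Λ * hA
        - A ^ 2 * (1 + α) * t ^ α * mul_inv_cancel₀ hΛ.ne'
    have hcg : 2 / Λ * (t ^ α - c * g t) ≤ 2 / Λ * (c * y t + t ^ α) :=
      mul_le_mul_of_nonneg_left (by nlinarith) (by positivity)
    have : 0 < c * (1 + α) * A / Λ * t ^ p := mul_pos (by positivity) (rpow_pos_of_pos ht.1 p)
    linarith
  exact (sq_le_sq₀ (sub_pos.2 (hb x hx)).le (neg_pos.2 (hy.lt_zero hx.1)).le).1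
    (by rw [neg_sq]; exact hsq x (Ioo_subset_Icc_self hx))

theorem inv_mul_rpow_lt_one_div_neg (hy : IsStableManifold α Λ c y) (hα : -1 < α)
    (hΛ : 0 < Λ) (hc : 0 < c) {s : ℝ} (hs : 0 < s) :
    (stableCoeff α Λ)⁻¹ * s ^ (-((1 + α) / 2)) < 1 / -y s := by
  rw [rpow_neg hs.le, ← mul_inv, one_div]
  exact inv_strictAnti₀ (neg_pos.2 (hy.lt_zero hs)) (hy.neg_lt hα hΛ hc hs)

theorem one_div_neg_lt_inv_mul_rpow (hy : IsStableManifold α Λ c y) (hα : -1 < α)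
    (hα1 : α < 1) (hΛ : 0 < Λ) (hc : 0 < c) {x s : ℝ} (hs : s ∈ Ioo 0 x)
    (hu : c * √((1 + α) / (2 * Λ)) * x ^ ((1 - α) / 2) < 1) :
    1 / -y s < (stableCoeff α Λ * (1 - c * √((1 + α) / (2 * Λ)) * x ^ ((1 - α) / 2)))⁻¹ *
      s ^ (-((1 + α) / 2)) := by
  have hA0 := stableCoeff_pos hα hΛ
  have hAB := sqrt_mul_stableCoeff_mul hα hΛ
  set A := stableCoeff α Λ
  set u := fun t => c * √((1 + α) / (2 * Λ)) * t ^ ((1 - α) / 2)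
  have hB : 0 < √((1 + α) / (2 * Λ)) := sqrt_pos.2 (div_pos (by linarith) (by positivity))
  -- `c t / Λ = A t^{(1+α)/2} u(t)`, so `-y ≥ A t^{(1+α)/2} - c t / Λ = A t^{(1+α)/2} (1 - u(t))`
  have hsplit : ∀ t > 0, c / Λ * t = A * t ^ ((1 + α) / 2) * u t := fun t ht => by
    have ht' := rpow_mul_rpow_of_add_eq_one ht (by ring : (1 + α) / 2 + (1 - α) / 2 = 1)
    simp only [u]
    linear_combination (-(c / Λ)) * ht' - c / Λ * t ^ ((1 + α) / 2) * t ^ ((1 - α) / 2) * hAB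
      + c * t ^ ((1 + α) / 2) * t ^ ((1 - α) / 2) * √((1 + α) / (2 * Λ)) * A
        * mul_inv_cancel₀ hΛ.ne'
  have hu_lt : ∀ t ∈ Ioo 0 x, u t < u x := fun t ht =>
    mul_lt_mul_of_pos_left (rpow_lt_rpow ht.1.le ht.2 (by linarith)) (by positivity)
  have hb : ∀ t ∈ Ioo 0 x, c / Λ * t < A * t ^ ((1 + α) / 2) := fun t ht => by
    rw [hsplit t ht.1]
    exact mul_lt_of_lt_one_right (mul_pos hA0 (rpow_pos_of_pos ht.1 _)) ((hu_lt t ht).trans hu)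
  have hlow : A * (1 - u x) * s ^ ((1 + α) / 2) < -y s := by
    refine lt_of_lt_of_le ?_ (hy.sub_le_neg hα hΛ hc hb hs)
    rw [hsplit s hs.1]
    nlinarith [hu_lt s hs, mul_pos hA0 (rpow_pos_of_pos hs.1 ((1 + α) / 2))]
  rw [rpow_neg hs.1.le, ← mul_inv, one_div]
  exact inv_strictAnti₀ (by nlinarith [mul_pos hA0 (rpow_pos_of_pos hs.1 ((1 + α) / 2))]) hlow

theorem intervalIntegrable_one_div_neg (hy : IsStableManifold α Λ c y) (hα : -1 < α)
    (hα1 : α < 1) (hΛ : 0 < Λ) (hc : 0 < c) {x : ℝ} (hx : 0 < x) :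
    IntervalIntegrable (fun s => 1 / -y s) volume 0 x := by
  set u := fun t => c * √((1 + α) / (2 * Λ)) * t ^ ((1 - α) / 2)
  have hu : Tendsto u (𝓝[>] 0) (𝓝 0) := by
    have h := (continuousAt_rpow_const 0 ((1 - α) / 2) (Or.inr (by linarith))).tendsto.const_mul
      (c * √((1 + α) / (2 * Λ)))
    rw [zero_rpow (by linarith), mul_zero] at h
    exact h.mono_left nhdsWithin_le_nhds
  obtain ⟨m, hum, hm⟩ := ((hu.eventually (gt_mem_nhds one_pos)).and (Ioo_mem_nhdsGT hx)).exists
  have hpow : IntegrableOn (fun s : ℝ => s ^ (-((1 + α) / 2))) (Ioo 0 m) :=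
    (intervalIntegrable_iff_integrableOn_Ioo_of_le hm.1.le).1
      (intervalIntegral.intervalIntegrable_rpow' (by linarith))
  refine IntervalIntegrable.trans (b := m) ?_ ?_
  · refine (intervalIntegrable_iff_integrableOn_Ioo_of_le hm.1.le).2
      ((hpow.const_mul (stableCoeff α Λ * (1 - u m))⁻¹).mono'
        ((hy.continuousOn_one_div_neg.mono Ioo_subset_Ioi_self).aestronglyMeasurable
          measurableSet_Ioo) ?_)
    refine (ae_restrict_iff' measurableSet_Ioo).2 (ae_of_all _ fun s hs => ?_)
    rw [norm_of_nonneg (one_div_pos.2 (neg_pos.2 (hy.lt_zero hs.1))).le]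
    exact (hy.one_div_neg_lt_inv_mul_rpow hα hα1 hΛ hc hs hum).le
  · exact (hy.continuousOn_one_div_neg.mono fun s hs => hm.1.trans_le hs.1)
      |>.intervalIntegrable_of_Icc hm.2.le

theorem lt_integral_one_div_neg (hy : IsStableManifold α Λ c y) (hα : -1 < α) (hα1 : α < 1)
    (hΛ : 0 < Λ) (hc : 0 < c) {x : ℝ} (hx : 0 < x) :
    √(2 * (1 + α) * Λ) / (1 - α) * x ^ ((1 - α) / 2) < ∫ s in (0:ℝ)..x, 1 / -y s := by
  have hlt := intervalIntegral.integral_lt_integral_of_forall_mem_Ioo_lt hx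
    ((intervalIntegral.intervalIntegrable_rpow' (by linarith)).const_mul (stableCoeff α Λ)⁻¹)
    (hy.intervalIntegrable_one_div_neg hα hα1 hΛ hc hx)
    fun s hs => hy.inv_mul_rpow_lt_one_div_neg hα hΛ hc hs.1
  rw [intervalIntegral.integral_const_mul, integral_rpow_neg_of_lt_one (by linarith),
    show 1 - (1 + α) / 2 = (1 - α) / 2 by ring] at hlt
  convert hlt using 1
  rw [eq_div_of_mul_eq (stableCoeff_pos hα hΛ).ne' (sqrt_mul_stableCoeff hα hΛ)]
  field_simp

theorem integral_one_div_neg_lt (hy : IsStableManifold α Λ c y) (hα : -1 < α) (hα1 : α < 1)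
    (hΛ : 0 < Λ) (hc : 0 < c) {x : ℝ} (hx : 0 < x)
    (hu : c * √((1 + α) / (2 * Λ)) * x ^ ((1 - α) / 2) < 1) :
    ∫ s in (0:ℝ)..x, 1 / -y s < √(2 * (1 + α) * Λ) / (1 - α) * x ^ ((1 - α) / 2) *
      (1 - c * √((1 + α) / (2 * Λ)) * x ^ ((1 - α) / 2))⁻¹ := by
  have hlt := intervalIntegral.integral_lt_integral_of_forall_mem_Ioo_lt hx
    (hy.intervalIntegrable_one_div_neg hα hα1 hΛ hc hx)
    ((intervalIntegral.intervalIntegrable_rpow' (by linarith)).const_mul _)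
    fun s hs => hy.one_div_neg_lt_inv_mul_rpow hα hα1 hΛ hc hs hu
  rw [intervalIntegral.integral_const_mul, integral_rpow_neg_of_lt_one (by linarith),
    show 1 - (1 + α) / 2 = (1 - α) / 2 by ring] at hlt
  convert hlt using 1
  rw [eq_div_of_mul_eq (stableCoeff_pos hα hΛ).ne' (sqrt_mul_stableCoeff hα hΛ), mul_inv]
  field_simp

end IsStableManifold

/-- The settling time `T(x,c) = ∫₀^x ds/(−y_c(s))` is finite, and for
`0 < x < x₁(c) = (2Λ/((1+α)c²))^{1/(1−α)}` it satisfies the stated two-sided bounds. -/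
theorem settling_time_bounds (α Λ c : ℝ) (hα : 0 ≤ α) (hα1 : α < 1)
    (hΛ : 0 < Λ) (hc : 0 < c) (y : ℝ → ℝ) (hy : IsStableManifold α Λ c y) :
    (∀ x > (0:ℝ), IntegrableOn (fun s => 1 / (-y s)) (Set.Ioo 0 x)) ∧
      ∀ x : ℝ, 0 < x → x < (2 * Λ / ((1 + α) * c ^ 2)) ^ ((1:ℝ) / (1 - α)) →
        Real.sqrt (2 * (1 + α) * Λ) / (1 - α) * x ^ ((1 - α) / 2)
            < (∫ s in (0:ℝ)..x, 1 / (-y s)) ∧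
          (∫ s in (0:ℝ)..x, 1 / (-y s))
            < Real.sqrt (2 * (1 + α) * Λ) / (1 - α) * x ^ ((1 - α) / 2) *
                (1 - c * Real.sqrt ((1 + α) / (2 * Λ)) * x ^ ((1 - α) / 2))⁻¹ := by
  have hα' : -1 < α := by linarith
  refine ⟨fun x hx => (intervalIntegrable_iff_integrableOn_Ioo_of_le hx.le).1
      (hy.intervalIntegrable_one_div_neg hα' hα1 hΛ hc hx), fun x hx hxX => ⟨?_, ?_⟩⟩
  · exact hy.lt_integral_one_div_neg hα' hα1 hΛ hc hx
  · exact hy.integral_one_div_neg_lt hα' hα1 hΛ hc hx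
      (mul_sqrt_mul_rpow_lt_one hα' hα1 hΛ hc hx.le hxX)
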